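/- Let M, N be finitely generated projective étale φ-modules over a commutative ring R with endomorphism φ. Then M^∨ ⊗_R N is a projective étale φ-module, and there is a natural R-linear bijection Hom_{R,φ}(M, N) ≅ (M^∨ ⊗_R N)^{φ=1}, where Hom_{R,φ} denotes R-module homomorphisms commuting with the φ-semilinear structures. -/

import Mathlib

open TensorProduct

variable {R : Type*} [CommRing R]

/-- `R` viewed as a module over itself via the ring endomorphism `φ`
(the `φ`-twist used to form the base change `φ*M`). -/
def Tw (_φ : R →+* R) : Type _ := R

/-- The identity, unwrapping the twist. -/
def Tw.val {φ : R →+* R} (s : Tw φ) : R := s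

instance (φ : R →+* R) : AddCommGroup (Tw φ) := inferInstanceAs (AddCommGroup R)
instance (φ : R →+* R) : Module R (Tw φ) := Module.compHom R φ

/-- The linearization `φ*M = R ⊗_{R,φ} M → M`, `s ⊗ m ↦ s • F m`, of a `φ`-semilinear
map `F : M → M`.  The `φ`-module `(M, F)` is *étale* precisely when this map is
bijective. -/
noncomputable def phiLin (φ : R →+* R) {M : Type*} [AddCommGroup M] [Module R M]
    (F : M →ₛₗ[φ] M) : Tw φ ⊗[R] M →+ M :=
  TensorProduct.liftAddHom
    { toFun := fun s => AddMonoidHom.mk' (fun m => s.val • F m)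
        (fun a b => by simp [smul_add])
      map_zero' := by ext m; exact zero_smul R (F m)
      map_add' := fun a b => by ext m; exact add_smul a.val b.val (F m) }
    (fun r s m => by
      show (r • s).val • F m = s.val • F (r • m)
      have h1 : (r • s).val = φ r * s.val := rfl
      rw [h1, F.map_smulₛₗ, smul_smul, mul_comm])

set_option linter.unusedSectionVars false

section Aux

variable (φ : R →+* R)

@[simp] lemma Tw.smul_val (r : R) (s : Tw φ) : (r • s).val = φ r * s.val := rfl

/-- multiplication by `r` on the twist, an `R`-linear map. -/
def mulT (r : R) : Tw φ →ₗ[R] Tw φ where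
  toFun s := (show Tw φ from (r * s.val : R))
  map_add' a b := mul_add r a.val b.val
  map_smul' c s := show (r * (φ c * s.val) : R) = φ c * (r * s.val) from mul_left_comm _ _ _

@[simp] lemma mulT_val (r : R) (s : Tw φ) : (mulT φ r s).val = r * s.val := rfl

def twOne : Tw φ := (1 : R)

@[simp] lemma twOne_val : (twOne φ).val = 1 := rfl

lemma mulT_one : mulT φ 1 = LinearMap.id := by
  ext s; show ((1 : R) * s.val : R) = s.val; rw [one_mul]

lemma mulT_mul (a b : R) : mulT φ (a * b) = (mulT φ a).comp (mulT φ b) := by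
  ext s; show ((a * b) * s.val : R) = a * (b * s.val); rw [mul_assoc]

variable {M P : Type*} [AddCommGroup M] [Module R M] [AddCommGroup P] [Module R P]

@[simp] lemma phiLin_tmul (F : M →ₛₗ[φ] M) (s : Tw φ) (m : M) :
    phiLin φ F (s ⊗ₜ[R] m) = s.val • F m := by
  simp [phiLin]

lemma phiLin_smul (F : M →ₛₗ[φ] M) (r : R) (x : Tw φ ⊗[R] M) :
    phiLin φ F (r • x) = φ r • phiLin φ F x := by
  induction x using TensorProduct.induction_on with
  | zero => simp
  | tmul s m => rw [smul_tmul']; simp [mul_smul]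
  | add x y hx hy => rw [smul_add, map_add, map_add, hx, hy, smul_add]

lemma phiLin_mulT (F : M →ₛₗ[φ] M) (r : R) (x : Tw φ ⊗[R] M) :
    phiLin φ F ((mulT φ r).rTensor M x) = r • phiLin φ F x := by
  induction x using TensorProduct.induction_on with
  | zero => simp
  | tmul s m => simp [mul_smul]
  | add x y hx hy => rw [map_add, map_add, map_add, hx, hy, smul_add]

variable {F : M →ₛₗ[φ] M}

noncomputable def psi (hF : Function.Bijective (phiLin φ F)) : M ≃+ Tw φ ⊗[R] M :=
  (AddEquiv.ofBijective (phiLin φ F) hF).symm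

variable (hF : Function.Bijective (phiLin φ F))

lemma phiLin_psi (m : M) : phiLin φ F (psi φ hF m) = m :=
  (AddEquiv.ofBijective (phiLin φ F) hF).apply_symm_apply m

lemma psi_phiLin (x : Tw φ ⊗[R] M) : psi φ hF (phiLin φ F x) = x :=
  (AddEquiv.ofBijective (phiLin φ F) hF).symm_apply_apply x

lemma psi_smul (r : R) (m : M) :
    psi φ hF (r • m) = (mulT φ r).rTensor M (psi φ hF m) := by
  refine hF.injective ?_
  rw [phiLin_psi, phiLin_mulT, phiLin_psi]

lemma psi_phi_smul (r : R) (m : M) :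
    psi φ hF (φ r • m) = r • psi φ hF m := by
  refine hF.injective ?_
  rw [phiLin_psi, phiLin_smul, phiLin_psi]

lemma psi_F (m : M) : psi φ hF (F m) = (twOne φ) ⊗ₜ[R] m := by
  refine hF.injective ?_
  rw [phiLin_psi, phiLin_tmul, twOne_val, one_smul]

end Aux

section Kap

variable (φ : R →+* R)
variable {M P : Type*} [AddCommGroup M] [Module R M] [AddCommGroup P] [Module R P]

lemma rTensor_mulT_smul (r a : R) (y : Tw φ ⊗[R] P) :
    (mulT φ (φ r * a)).rTensor P y = (mulT φ a).rTensor P (r • y) := by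
  induction y using TensorProduct.induction_on with
  | zero => simp
  | tmul s p =>
      rw [smul_tmul', LinearMap.rTensor_tmul, LinearMap.rTensor_tmul]
      congr 1
      show ((φ r * a) * s.val : R) = a * (φ r * s.val)
      ring
  | add x y hx hy => rw [smul_add, map_add, map_add, hx, hy]

/-- the `Tw`-semilinear extension of `h : M → Tw ⊗ P` to `Tw ⊗ M → Tw ⊗ P`. -/
noncomputable def kap (h : M →ₗ[R] Tw φ ⊗[R] P) : Tw φ ⊗[R] M →+ Tw φ ⊗[R] P :=
  TensorProduct.liftAddHom
    { toFun := fun u => AddMonoidHom.mk' (fun m => (mulT φ u.val).rTensor P (h m))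
        (fun a b => by simp [map_add])
      map_zero' := by
        ext m
        show (mulT φ (0 : Tw φ).val).rTensor P (h m) = 0
        have : (0 : Tw φ).val = (0 : R) := rfl
        rw [this]
        have : mulT φ (0 : R) = 0 := by ext s; show ((0:R) * s.val : R) = 0; rw [zero_mul]
        rw [this, LinearMap.rTensor_zero]; rfl
      map_add' := fun a b => by
        ext m
        show (mulT φ (a + b).val).rTensor P (h m) =
          (mulT φ a.val).rTensor P (h m) + (mulT φ b.val).rTensor P (h m)
        have : (a + b).val = a.val + b.val := rfl
        rw [this]
        have : mulT φ (a.val + b.val) = mulT φ a.val + mulT φ b.val := by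
          ext s; show ((a.val + b.val) * s.val : R) = a.val * s.val + b.val * s.val
          rw [add_mul]
        rw [this, LinearMap.rTensor_add, LinearMap.add_apply] }
    (fun r u m => by
      show (mulT φ (r • u).val).rTensor P (h m) = (mulT φ u.val).rTensor P (h (r • m))
      rw [Tw.smul_val, h.map_smul, rTensor_mulT_smul])

@[simp] lemma kap_tmul (h : M →ₗ[R] Tw φ ⊗[R] P) (u : Tw φ) (m : M) :
    kap φ h (u ⊗ₜ[R] m) = (mulT φ u.val).rTensor P (h m) := by
  simp [kap]

lemma kap_add (h h' : M →ₗ[R] Tw φ ⊗[R] P) (x : Tw φ ⊗[R] M) :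
    kap φ (h + h') x = kap φ h x + kap φ h' x := by
  induction x using TensorProduct.induction_on with
  | zero => simp
  | tmul u m => simp [map_add]
  | add x y hx hy => rw [map_add, map_add, map_add, hx, hy]; abel

lemma kap_zero (x : Tw φ ⊗[R] M) : kap φ (0 : M →ₗ[R] Tw φ ⊗[R] P) x = 0 := by
  induction x using TensorProduct.induction_on with
  | zero => simp
  | tmul u m => simp
  | add x y hx hy => rw [map_add, hx, hy, add_zero]

lemma kap_smul (r : R) (h : M →ₗ[R] Tw φ ⊗[R] P) (x : Tw φ ⊗[R] M) :
    kap φ (r • h) x = r • kap φ h x := by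
  induction x using TensorProduct.induction_on with
  | zero => simp
  | tmul u m => simp [map_smul]
  | add x y hx hy => rw [map_add, map_add, hx, hy, smul_add]

lemma kap_mulT (r : R) (h : M →ₗ[R] Tw φ ⊗[R] P) (x : Tw φ ⊗[R] M) :
    kap φ h ((mulT φ r).rTensor M x) = (mulT φ r).rTensor P (kap φ h x) := by
  induction x using TensorProduct.induction_on with
  | zero => simp
  | tmul u m =>
      rw [LinearMap.rTensor_tmul, kap_tmul, kap_tmul]
      have : (mulT φ r u).val = r * u.val := rfl
      rw [this, mulT_mul, LinearMap.rTensor_comp, LinearMap.comp_apply]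
  | add x y hx hy => simp only [map_add, hx, hy]

lemma kap_comp_mulT (c : R) (h : M →ₗ[R] Tw φ ⊗[R] P) (x : Tw φ ⊗[R] M) :
    kap φ ((mulT φ c).rTensor P ∘ₗ h) x = (mulT φ c).rTensor P (kap φ h x) := by
  induction x using TensorProduct.induction_on with
  | zero => simp
  | tmul u m =>
      rw [kap_tmul, kap_tmul, LinearMap.comp_apply]
      rw [← LinearMap.comp_apply (LinearMap.rTensor P (mulT φ u.val)),
        ← LinearMap.rTensor_comp, ← mulT_mul]
      rw [← LinearMap.comp_apply (LinearMap.rTensor P (mulT φ c)),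
        ← LinearMap.rTensor_comp, ← mulT_mul, mul_comm]
  | add x y hx hy => simp only [map_add, hx, hy]

lemma kap_one (h : M →ₗ[R] Tw φ ⊗[R] P) (m : M) :
    kap φ h ((twOne φ) ⊗ₜ[R] m) = h m := by
  rw [kap_tmul, twOne_val, mulT_one, LinearMap.rTensor_id, LinearMap.id_apply]

end Kap

section Theta

variable (φ : R →+* R)
variable {M P : Type*} [AddCommGroup M] [Module R M] [AddCommGroup P] [Module R P]
variable (F : M →ₛₗ[φ] M) (hF : Function.Bijective (phiLin φ F)) (FP : P →ₛₗ[φ] P)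

/-- `θ h = linᴾ ∘ (κ h) ∘ (linᴹ)⁻¹`. -/
noncomputable def theta (h : M →ₗ[R] Tw φ ⊗[R] P) : M →ₗ[R] P where
  toFun m := phiLin φ FP (kap φ h (psi φ hF m))
  map_add' a b := by simp only [map_add]
  map_smul' r m := by
    show phiLin φ FP (kap φ h (psi φ hF (r • m))) =
      (RingHom.id R) r • phiLin φ FP (kap φ h (psi φ hF m))
    rw [psi_smul, kap_mulT, phiLin_mulT, RingHom.id_apply]

@[simp] lemma theta_apply (h : M →ₗ[R] Tw φ ⊗[R] P) (m : M) :
    theta φ F hF FP h m = phiLin φ FP (kap φ h (psi φ hF m)) := rfl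

lemma theta_add (h h' : M →ₗ[R] Tw φ ⊗[R] P) :
    theta φ F hF FP (h + h') = theta φ F hF FP h + theta φ F hF FP h' := by
  ext m; simp [kap_add, map_add]

lemma theta_zero : theta φ F hF FP (0 : M →ₗ[R] Tw φ ⊗[R] P) = 0 := by
  ext m; simp [kap_zero]

lemma theta_smul (r : R) (h : M →ₗ[R] Tw φ ⊗[R] P) :
    theta φ F hF FP (r • h) = φ r • theta φ F hF FP h := by
  ext m; simp [kap_smul, phiLin_smul]

lemma theta_mulT (c : R) (h : M →ₗ[R] Tw φ ⊗[R] P) :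
    theta φ F hF FP ((mulT φ c).rTensor P ∘ₗ h) = c • theta φ F hF FP h := by
  ext m; simp [kap_comp_mulT, phiLin_mulT]

variable (hP : Function.Bijective (phiLin φ FP))

/-- `θ⁻¹ g = (linᴾ)⁻¹ ∘ g ∘ F`. -/
noncomputable def thetaInv (g : M →ₗ[R] P) : M →ₗ[R] Tw φ ⊗[R] P where
  toFun m := psi φ hP (g (F m))
  map_add' a b := by simp only [map_add]
  map_smul' r m := by
    show psi φ hP (g (F (r • m))) = (RingHom.id R) r • psi φ hP (g (F m))
    rw [F.map_smulₛₗ, g.map_smul, psi_phi_smul, RingHom.id_apply]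

lemma theta_thetaInv (g : M →ₗ[R] P) :
    theta φ F hF FP (thetaInv φ F FP hP g) = g := by
  ext m
  have claim : ∀ x : Tw φ ⊗[R] M,
      phiLin φ FP (kap φ (thetaInv φ F FP hP g) x) = g (phiLin φ F x) := by
    intro x
    induction x using TensorProduct.induction_on with
    | zero => simp
    | tmul u m' =>
        rw [kap_tmul, phiLin_mulT, phiLin_tmul]
        show u.val • phiLin φ FP (psi φ hP (g (F m'))) = g (u.val • F m')
        rw [phiLin_psi, g.map_smul]
    | add x y hx hy => simp only [map_add, hx, hy]
  rw [theta_apply, claim, phiLin_psi]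

lemma thetaInv_theta (h : M →ₗ[R] Tw φ ⊗[R] P) :
    thetaInv φ F FP hP (theta φ F hF FP h) = h := by
  ext m
  show psi φ hP (theta φ F hF FP h (F m)) = h m
  rw [theta_apply, psi_F, kap_one, psi_phiLin]

include hP in
lemma theta_bijective : Function.Bijective (theta φ F hF FP) :=
  Function.bijective_iff_has_inverse.mpr
    ⟨thetaInv φ F FP hP, fun h => thetaInv_theta φ F hF FP hP h,
      fun g => theta_thetaInv φ F hF FP hP g⟩

lemma theta_F (h : M →ₗ[R] Tw φ ⊗[R] P) (m : M) :
    theta φ F hF FP h (F m) = phiLin φ FP (h m) := by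
  rw [theta_apply, psi_F, kap_one]

end Theta

section DTH

variable {M₁ M₂ P : Type*} [AddCommGroup M₁] [Module R M₁] [AddCommGroup M₂] [Module R M₂]
  [AddCommGroup P] [Module R P]

lemma dualTensorHom_natural (u : M₁ →ₗ[R] M₂) (t : Module.Dual R M₂ ⊗[R] P) :
    dualTensorHom R M₁ P ((u.dualMap).rTensor P t) = (dualTensorHom R M₂ P t) ∘ₗ u := by
  induction t using TensorProduct.induction_on with
  | zero => simp
  | tmul f x => ext m; simp
  | add x y hx hy => simp only [map_add, hx, hy]; rw [LinearMap.add_comp]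

lemma dualTensorHom_bijective' (M P : Type*) [AddCommGroup M] [Module R M]
    [Module.Finite R M] [Module.Projective R M] [AddCommGroup P] [Module R P] :
    Function.Bijective (dualTensorHom R M P) := by
  obtain ⟨n, p, s, -, -, hps⟩ := Module.Finite.exists_comp_eq_id_of_projective R M
  have hfree : Function.Bijective (dualTensorHom R (Fin n → R) P) := by
    have : ⇑(dualTensorHom R (Fin n → R) P) =
        ⇑(dualTensorHomEquivOfBasis (R := R) (N := P) (Pi.basisFun R (Fin n))) := by
      funext x
      exact (dualTensorHomEquivOfBasis_apply (Pi.basisFun R (Fin n)) x).symm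
    rw [this]
    exact (dualTensorHomEquivOfBasis (R := R) (N := P) (Pi.basisFun R (Fin n))).bijective
  constructor
  · intro t t' h
    have h2 : dualTensorHom R (Fin n → R) P ((p.dualMap).rTensor P t) =
        dualTensorHom R (Fin n → R) P ((p.dualMap).rTensor P t') := by
      rw [dualTensorHom_natural, dualTensorHom_natural, h]
    have h3 := hfree.injective h2
    have h4 := congrArg ((s.dualMap).rTensor P) h3
    rwa [← LinearMap.comp_apply, ← LinearMap.comp_apply, ← LinearMap.rTensor_comp,
      LinearMap.dualMap_comp_dualMap, hps, LinearMap.dualMap_id, LinearMap.rTensor_id,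
      LinearMap.id_apply, LinearMap.id_apply] at h4
  · intro g
    obtain ⟨u, hu⟩ := hfree.surjective (g ∘ₗ p)
    refine ⟨(s.dualMap).rTensor P u, ?_⟩
    rw [dualTensorHom_natural, hu, LinearMap.comp_assoc, hps, LinearMap.comp_id]

end DTH

section Main

variable (φ : R →+* R) {M N : Type*} [AddCommGroup M] [Module R M] [Module.Finite R M]
  [Module.Projective R M] [AddCommGroup N] [Module R N]

/-- the canonical isomorphism `M^∨ ⊗ N ≃ Hom(M, N)` for `M` finite projective. -/
noncomputable def Ee : Module.Dual R M ⊗[R] N ≃ₗ[R] (M →ₗ[R] N) :=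
  LinearEquiv.ofBijective (dualTensorHom R M N) (dualTensorHom_bijective' M N)

@[simp] lemma Ee_apply (t : Module.Dual R M ⊗[R] N) :
    Ee (R := R) t = dualTensorHom R M N t := rfl

noncomputable def tmulOneMap : N →ₗ[R] Tw φ ⊗[R] N :=
  TensorProduct.mk R (Tw φ) N (twOne φ)

@[simp] lemma tmulOneMap_apply (n : N) : tmulOneMap φ n = (twOne φ) ⊗ₜ[R] n := rfl

variable (FM : M →ₛₗ[φ] M) (hM : Function.Bijective (phiLin φ FM)) (FN : N →ₛₗ[φ] N)

/-- the `φ`-semilinear structure on `Hom(M, N)`: `Φ g = linᴺ ∘ (id ⊗ g) ∘ (linᴹ)⁻¹`. -/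
noncomputable def PhiMap (g : M →ₗ[R] N) : M →ₗ[R] N :=
  theta φ FM hM FN (tmulOneMap φ ∘ₗ g)

lemma PhiMap_add (g g' : M →ₗ[R] N) :
    PhiMap φ FM hM FN (g + g') = PhiMap φ FM hM FN g + PhiMap φ FM hM FN g' := by
  unfold PhiMap
  rw [LinearMap.comp_add, theta_add]

lemma PhiMap_smul (r : R) (g : M →ₗ[R] N) :
    PhiMap φ FM hM FN (r • g) = φ r • PhiMap φ FM hM FN g := by
  unfold PhiMap
  have : tmulOneMap φ ∘ₗ (r • g) = r • (tmulOneMap φ ∘ₗ g) := by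
    ext m; simp
  rw [this, theta_smul]

lemma PhiMap_zero : PhiMap φ FM hM FN (0 : M →ₗ[R] N) = 0 := by
  unfold PhiMap
  rw [LinearMap.comp_zero, theta_zero]

lemma PhiMap_fix (g : M →ₗ[R] N) :
    PhiMap φ FM hM FN g = g ↔ ∀ m, g (FM m) = FN (g m) := by
  constructor
  · intro h m
    conv_lhs => rw [← h]
    show theta φ FM hM FN (tmulOneMap φ ∘ₗ g) (FM m) = FN (g m)
    rw [theta_F]
    show phiLin φ FN ((twOne φ) ⊗ₜ[R] (g m)) = FN (g m)
    rw [phiLin_tmul, twOne_val, one_smul]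
  · intro hc
    ext m
    show phiLin φ FN (kap φ (tmulOneMap φ ∘ₗ g) (psi φ hM m)) = g m
    have claim : ∀ x : Tw φ ⊗[R] M,
        phiLin φ FN (kap φ (tmulOneMap φ ∘ₗ g) x) = g (phiLin φ FM x) := by
      intro x
      induction x using TensorProduct.induction_on with
      | zero => simp
      | tmul u m' =>
          rw [kap_tmul, phiLin_tmul]
          show phiLin φ FN
              ((mulT φ u.val).rTensor N ((twOne φ) ⊗ₜ[R] (g m'))) = g (u.val • FM m')
          rw [LinearMap.rTensor_tmul, phiLin_tmul, mulT_val, twOne_val, mul_one,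
            ← hc, ← g.map_smul]
      | add x y hx hy => simp only [map_add, hx, hy]
    rw [claim, phiLin_psi]

/-- the `φ`-semilinear structure on `M^∨ ⊗ N`, transported from `Hom(M, N)`. -/
noncomputable def Fmain : (Module.Dual R M ⊗[R] N) →ₛₗ[φ] (Module.Dual R M ⊗[R] N) where
  toFun t := (Ee (R := R)).symm (PhiMap φ FM hM FN (Ee (R := R) t))
  map_add' t t' := by simp only [map_add, PhiMap_add]
  map_smul' r t := by
    show (Ee (R := R)).symm (PhiMap φ FM hM FN (Ee (R := R) (r • t))) =
      φ r • (Ee (R := R)).symm (PhiMap φ FM hM FN (Ee (R := R) t))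
    rw [map_smul, PhiMap_smul, map_smul]

@[simp] lemma Fmain_apply (t : Module.Dual R M ⊗[R] N) :
    Fmain φ FM hM FN t = (Ee (R := R)).symm (PhiMap φ FM hM FN (Ee (R := R) t)) := rfl

/-- the linearization of `M^∨ ⊗ N`, rewritten through `Hom(M, T ⊗ N)`. -/
noncomputable def Lam : Tw φ ⊗[R] (Module.Dual R M ⊗[R] N) →ₗ[R] (M →ₗ[R] Tw φ ⊗[R] N) :=
  (dualTensorHom R M (Tw φ ⊗[R] N)) ∘ₗ
    (TensorProduct.leftComm R (Tw φ) (Module.Dual R M) N).toLinearMap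

lemma Lam_tmul (sc : Tw φ) (f : Module.Dual R M) (n : N) :
    Lam φ (sc ⊗ₜ[R] (f ⊗ₜ[R] n)) = dualTensorHom R M (Tw φ ⊗[R] N) (f ⊗ₜ[R] (sc ⊗ₜ[R] n)) := by
  unfold Lam
  rw [LinearMap.comp_apply, LinearEquiv.coe_coe, TensorProduct.leftComm_tmul]

lemma Lam_bijective : Function.Bijective (Lam φ (M := M) (N := N)) :=
  (dualTensorHom_bijective' M (Tw φ ⊗[R] N)).comp
    (TensorProduct.leftComm R (Tw φ) (Module.Dual R M) N).bijective

lemma key_formula (sc : Tw φ) (t : Module.Dual R M ⊗[R] N) :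
    sc.val • PhiMap φ FM hM FN (Ee (R := R) t) =
      theta φ FM hM FN (Lam φ (sc ⊗ₜ[R] t)) := by
  induction t using TensorProduct.induction_on with
  | zero =>
      rw [map_zero, PhiMap_zero, smul_zero, TensorProduct.tmul_zero, map_zero, theta_zero]
  | tmul f n =>
      rw [Lam_tmul]
      have hA : dualTensorHom R M (Tw φ ⊗[R] N) (f ⊗ₜ[R] (sc ⊗ₜ[R] n)) =
          (mulT φ sc.val).rTensor N ∘ₗ (tmulOneMap φ ∘ₗ dualTensorHom R M N (f ⊗ₜ[R] n)) := by
        ext m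
        show f m • (sc ⊗ₜ[R] n) =
          (mulT φ sc.val).rTensor N ((twOne φ) ⊗ₜ[R] (f m • n))
        rw [LinearMap.rTensor_tmul, ← TensorProduct.tmul_smul]
        congr 1
        show (sc.val : R) = sc.val * (1 : R)
        rw [mul_one]
      rw [hA, theta_mulT]
      rfl
  | add t t' ht ht' =>
      rw [map_add, PhiMap_add, smul_add, ht, ht', TensorProduct.tmul_add, map_add, theta_add]

lemma phiLin_Fmain_eq (x : Tw φ ⊗[R] (Module.Dual R M ⊗[R] N)) :
    phiLin φ (Fmain φ FM hM FN) x =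
      (Ee (R := R)).symm (theta φ FM hM FN (Lam φ x)) := by
  induction x using TensorProduct.induction_on with
  | zero => rw [map_zero, map_zero, theta_zero, map_zero]
  | tmul sc t =>
      rw [phiLin_tmul, Fmain_apply, ← map_smul, key_formula]
  | add x y hx hy => simp only [map_add, theta_add, hx, hy]

lemma phiLin_Fmain_bijective (hN : Function.Bijective (phiLin φ FN)) :
    Function.Bijective (phiLin φ (M := Module.Dual R M ⊗[R] N) (Fmain φ FM hM FN)) := by
  have hfun : ⇑(phiLin φ (M := Module.Dual R M ⊗[R] N) (Fmain φ FM hM FN)) =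
      ⇑(Ee (R := R) (M := M) (N := N)).symm ∘ theta φ FM hM FN ∘ ⇑(Lam φ (M := M) (N := N)) :=
    funext (phiLin_Fmain_eq φ FM hM FN)
  rw [hfun]
  exact ((Ee (R := R) (M := M) (N := N)).symm.bijective.comp
    (theta_bijective φ FM hM FN hN)).comp (Lam_bijective φ)

end Main

/-- Let `M, N` be finitely generated projective étale `φ`-modules over a commutative
ring `R` with endomorphism `φ`.  Then `M^∨ ⊗_R N` carries an étale `φ`-module
structure, and there is a natural bijection
`Hom_{R,φ}(M, N) ≅ (M^∨ ⊗_R N)^{φ=1}`, induced by the canonical map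
`dualTensorHom : M^∨ ⊗_R N → Hom_R(M, N)`. -/
theorem stmt_17 {R : Type*} [CommRing R] (φ : R →+* R)
    {M N : Type*} [AddCommGroup M] [Module R M] [Module.Finite R M]
    [Module.Projective R M]
    [AddCommGroup N] [Module R N] [Module.Finite R N] [Module.Projective R N]
    (FM : M →ₛₗ[φ] M) (hM : Function.Bijective (phiLin φ FM))
    (FN : N →ₛₗ[φ] N) (hN : Function.Bijective (phiLin φ FN)) :
    ∃ F : (Module.Dual R M ⊗[R] N) →ₛₗ[φ] (Module.Dual R M ⊗[R] N),
      Function.Bijective (phiLin φ (M := Module.Dual R M ⊗[R] N) F) ∧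
      ∃ e : {t : Module.Dual R M ⊗[R] N // F t = t} ≃
            {g : M →ₗ[R] N // ∀ m, g (FM m) = FN (g m)},
        ∀ t, (e t).val = dualTensorHom R M N t.val := by
  refine ⟨Fmain φ FM hM FN, phiLin_Fmain_bijective φ FM hM FN hN, ?_⟩
  have hfix : ∀ t : Module.Dual R M ⊗[R] N,
      Fmain φ FM hM FN t = t ↔
        ∀ m, (Ee (R := R) t) (FM m) = FN ((Ee (R := R) t) m) := by
    intro t
    rw [Fmain_apply, LinearEquiv.symm_apply_eq]
    exact PhiMap_fix φ FM hM FN (Ee (R := R) t)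
  refine ⟨{
      toFun := fun t => ⟨Ee (R := R) t.1, (hfix t.1).mp t.2⟩
      invFun := fun g => ⟨(Ee (R := R)).symm g.1, by
        refine (hfix _).mpr ?_
        intro m
        rw [LinearEquiv.apply_symm_apply]
        exact g.2 m⟩
      left_inv := fun t => Subtype.ext (LinearEquiv.symm_apply_apply _ t.1)
      right_inv := fun g => Subtype.ext (LinearEquiv.apply_symm_apply _ g.1) },
    fun t => rfl⟩
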